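/- Define the k-linear isomorphism f : R̄^{−p,*}(K) → B^{−p,*}(K) on basis elements by f(ω_I y_L) = ε(I,L) s_I t_L, where ε(I,L) is the sign of the permutation converting the concatenation IL into an increasing sequence. Then f commutes with the differentials up to the sign (−1)^p: for α ∈ R̄^{−p,*}(K), f(d_{R̄}(α)) = (−1)^p d_B(f(α)). -/

import Mathlib

/-!
STATEMENT 9.  The `k`-linear map `f : R̄(K) → B(K)` defined on basis monomials by
`f(ω_I y_L) = ε(I,L) s_I t_L`, where `ε(I,L) = (−1)^{∑_{i∈I} #{l∈L : l<i}}` is the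
sign of the permutation converting the concatenation `IL` into an increasing
sequence, is a `k`-module isomorphism and commutes with the differentials up to
the sign `(−1)^p` on `R̄^{−p,*}(K)`: for `α` of ω-length `p`,
`f(d_{R̄}(α)) = (−1)^p d_B(f(α))`.  Both `R̄(K)` and `B(K)` are modelled by their
monomial bases `(I,L)` with the explicit differentials of the paper.
-/

open Finsupp

variable (k : Type) [CommRing k] (m : ℕ) (K : Finset (Fin m) → Prop) [DecidablePred K]

abbrev MonMod (k : Type) [CommRing k] (m : ℕ) := (Finset (Fin m) × Finset (Fin m)) →₀ k

/-- The differential of `R̄(K)`: sign `(−1)^{k+1}`, `k` the position of `i` in `I`. -/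
noncomputable def dRbar : MonMod k m →ₗ[k] MonMod k m :=
  Finsupp.lift (MonMod k m) k _ fun p =>
    ∑ i ∈ p.1,
      if i ∉ p.2 ∧ K (insert i p.2) then
        Finsupp.single (p.1.erase i, insert i p.2)
          ((-1 : k) ^ ((p.1.filter fun j => j ≤ i).card + 1))
      else 0

/-- The differential of `B(K)`: sign `(−1)^{r+1}`, `r = #{l ∈ L : l < i}`. -/
noncomputable def dB : MonMod k m →ₗ[k] MonMod k m :=
  Finsupp.lift (MonMod k m) k _ fun p =>
    ∑ i ∈ p.1,
      if i ∉ p.2 ∧ K (insert i p.2) then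
        Finsupp.single (p.1.erase i, insert i p.2)
          ((-1 : k) ^ ((p.2.filter fun l => l < i).card + 1))
      else 0

/-- `f(ω_I y_L) = ε(I,L) s_I t_L`, `ε(I,L)` the sorting sign of the concatenation `IL`. -/
noncomputable def fRB : MonMod k m →ₗ[k] MonMod k m :=
  Finsupp.lift (MonMod k m) k _ fun p =>
    Finsupp.single p ((-1 : k) ^ (∑ i ∈ p.1, (p.2.filter fun l => l < i).card))

/-!
On a monomial, `f` is multiplication by `ε(I,L) = (−1)^{E(I,L)}` with
`E(I,L) = ∑_{j∈I} #{l∈L : l<j}`, so `f` is an involution. Moving `i` from `I` to `L` changes `E`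
by `#{j∈I : i<j} − #{l∈L : l<i}`; since `#{j∈I : i<j} + #{j∈I : j≤i} = #I`, each term of
`f(d_{R̄}(ω_I y_L))` differs from the matching term of `d_B(f(ω_I y_L))` by the sign `(−1)^{#I}`.
-/

open Finset

theorem Finsupp.lift_single {R M X : Type*} [Semiring R] [AddCommMonoid M] [Module R M]
    (g : X → M) (x : X) (c : R) : Finsupp.lift M R X g (Finsupp.single x c) = c • g x := by
  simp [Finsupp.lift_apply, Finsupp.sum_single_index]

section CrossInversions

variable {α : Type*} [LinearOrder α]

def crossInversions (I L : Finset α) : ℕ := ∑ j ∈ I, #{l ∈ L | l < j}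

theorem crossInversions_erase_insert {I L : Finset α} {i : α} (hi : i ∈ I) (hiL : i ∉ L) :
    crossInversions (I.erase i) (insert i L) + #{l ∈ L | l < i}
      = crossInversions I L + #{j ∈ I | i < j} := by
  have h_insert : ∀ j ∈ I.erase i,
      #{l ∈ insert i L | l < j} = #{l ∈ L | l < j} + if i < j then 1 else 0 := by
    intro j _
    rw [filter_insert]
    split_ifs
    · rw [card_insert_of_notMem (by simp [hiL])]
    · simp
  have h_count : (∑ j ∈ I.erase i, if i < j then 1 else 0) = #{j ∈ I | i < j} := by
    rw [card_filter, sum_erase _ (by simp)]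
  rw [crossInversions, crossInversions, sum_congr rfl h_insert, sum_add_distrib, h_count,
    ← sum_erase_add I _ hi]
  ring

theorem neg_one_pow_crossInversions_erase_insert {R : Type*} [Monoid R] [HasDistribNeg R]
    {I L : Finset α} {i : α} (hi : i ∈ I) (hiL : i ∉ L) :
    (-1 : R) ^ (#{j ∈ I | j ≤ i} + 1) * (-1 : R) ^ crossInversions (I.erase i) (insert i L)
      = (-1 : R) ^ #I * ((-1 : R) ^ crossInversions I L * (-1 : R) ^ (#{l ∈ L | l < i} + 1)) := by
  have h_split : #{j ∈ I | i < j} + #{j ∈ I | j ≤ i} = #I := by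
    simpa only [not_le, add_comm] using card_filter_add_card_filter_not (s := I) (· ≤ i)
  have h_move := crossInversions_erase_insert hi hiL
  simp only [← pow_add]
  refine neg_one_pow_congr ?_
  simp only [Nat.even_iff]
  omega

end CrossInversions

theorem fRB_single (q : Finset (Fin m) × Finset (Fin m)) (c : k) :
    fRB k m (Finsupp.single q c)
      = Finsupp.single q (c * (-1 : k) ^ crossInversions q.1 q.2) := by
  rw [fRB, Finsupp.lift_single, Finsupp.smul_single, smul_eq_mul]
  rfl

theorem fRB_involutive : Function.Involutive (fRB k m) := by
  intro α
  induction α using Finsupp.induction_linear with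
  | zero => simp
  | add a b ha hb => rw [map_add, map_add, ha, hb]
  | single q c =>
    rw [fRB_single, fRB_single, mul_assoc, ← pow_add, (Even.add_self _).neg_one_pow, mul_one]

theorem fRB_dRbar_single (q : Finset (Fin m) × Finset (Fin m)) :
    fRB k m (dRbar k m K (Finsupp.single q 1))
      = (-1 : k) ^ #q.1 • dB k m K (fRB k m (Finsupp.single q 1)) := by
  rw [dRbar, Finsupp.lift_single, one_smul, map_sum, fRB_single, one_mul, dB,
    Finsupp.lift_single, Finset.smul_sum, Finset.smul_sum]
  refine sum_congr rfl fun i hi => ?_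
  split_ifs with h
  · simp only [fRB_single, Finsupp.smul_single, smul_eq_mul]
    rw [neg_one_pow_crossInversions_erase_insert hi h.1]
  · simp

theorem f_commutes_with_differentials_up_to_sign :
    Function.Bijective (fRB k m) ∧
    ∀ (p : ℕ) (α : MonMod k m),
      α ∈ Finsupp.supported k k {q : Finset (Fin m) × Finset (Fin m) | q.1.card = p} →
      fRB k m (dRbar k m K α) = ((-1 : k) ^ p) • dB k m K (fRB k m α) := by
  refine ⟨(fRB_involutive k m).bijective, fun p α hα => ?_⟩
  rw [Finsupp.supported_eq_span_single] at hα
  induction hα using Submodule.span_induction with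
  | mem x hx =>
    obtain ⟨q, hq, rfl⟩ := hx
    rw [fRB_dRbar_single, show #q.1 = p from hq]
  | zero => simp
  | add x y _ _ hx hy => rw [map_add, map_add, hx, hy, map_add, map_add, smul_add]
  | smul c x _ hx => rw [map_smul, map_smul, hx, map_smul, map_smul, smul_comm]
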